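/- arXiv:0911.3926 — 3 statements merged into one kernel-verified Lean document; each statement's English description precedes it below -/
import Mathlib

section
/- Let N be a group and let {1} = N₀ ≤ N₁ ≤ ⋯ ≤ N_m = N be a finite chain of subgroups such that for each j = 1, …, m the subgroup N_{j-1} is normal in N_j and the quotient group N_j / N_{j-1} is finitely generated and abelian. Let H be a subgroup of N and let f be an automorphism of N such that f(H) ≤ H and f(N_j) = N_j for each j = 0, 1, …, m. Then f(H) = H. (Lemma 9.1 of the paper.) -/
/-!
A group with a finite subnormal series whose factors are finitely generated abelian groups
satisfies the ascending chain condition on subgroups: the condition holds for finitely generated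
abelian groups (they are Noetherian `ℤ`-modules) and passes to extensions, since a subgroup `K`
of `B` is determined, among the subgroups of `B` containing it, by `K ⊓ A` and its image in
`B ⧸ A`. Under the ascending chain condition an automorphism `f` with `f H < H` is impossible,
as it would produce the strictly increasing chain `H < f⁻¹ H < f⁻² H < ⋯`.
-/

theorem OrderIso.apply_eq_of_apply_le {α : Type*} [PartialOrder α] [WellFoundedGT α]
    (e : α ≃o α) {a : α} (h : e a ≤ a) : e a = a := by
  by_contra hne
  have hlt : a < e.symm a := by simpa using e.symm.strictMono (lt_of_le_of_ne h hne)
  exact not_strictMono_of_wellFoundedGT (fun n => e.symm^[n] a)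
    (strictMono_nat_of_lt_succ fun n => by
      simpa only [Function.iterate_succ_apply] using (e.symm.strictMono.iterate n) hlt)

namespace QuotientGroup

theorem fg_of_closure_union_eq_top {Γ : Type*} [Group Γ] (N : Subgroup Γ) [N.Normal]
    {s : Set Γ} (hs : s.Finite) (h : Subgroup.closure (s ∪ N) = ⊤) : Group.FG (Γ ⧸ N) := by
  rw [Group.fg_iff]
  refine ⟨mk' N '' s, ?_, hs.image _⟩
  rw [← MonoidHom.map_closure, ← Subgroup.map_top_of_surjective _ (mk'_surjective N), ← h,
    Subgroup.closure_union, Subgroup.closure_eq, Subgroup.map_sup, map_mk'_self, sup_bot_eq]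

end QuotientGroup

namespace Subgroup

variable {G : Type*} [Group G]

theorem wellFoundedGT_of_isMulCommutative_of_fg (Q : Type*) [Group Q]
    [IsMulCommutative Q] [Group.FG Q] : WellFoundedGT (Subgroup Q) := by
  let _ : CommGroup Q := { mul_comm := mul_comm' }
  exact (toAddSubgroup.trans AddSubgroup.toIntSubmodule).strictMono.wellFoundedGT

theorem le_of_map_mk_subgroupOf_le {A B K K' : Subgroup G}
    [(A.subgroupOf B).Normal] (hK' : K' ≤ B) (hle : K ≤ K') (hinf : K' ⊓ A ≤ K)
    (hmap : (K'.subgroupOf B).map (QuotientGroup.mk' (A.subgroupOf B)) ≤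
      (K.subgroupOf B).map (QuotientGroup.mk' (A.subgroupOf B))) : K' ≤ K := by
  intro k' hk'
  obtain ⟨k, hk, hkk'⟩ := hmap ⟨⟨k', hK' hk'⟩, hk', rfl⟩
  have hdiff : (k : G)⁻¹ * k' ∈ A := by
    rw [QuotientGroup.mk'_apply, QuotientGroup.mk'_apply, QuotientGroup.eq] at hkk'
    exact hkk'
  have hkK : (k : G) ∈ K := hk
  have hdiffK : (k : G)⁻¹ * k' ∈ K := hinf ⟨K'.mul_mem (K'.inv_mem (hle hkK)) hk', hdiff⟩
  simpa only [mul_inv_cancel_left] using K.mul_mem hkK hdiffK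

theorem wellFoundedGT_Iic_of_quotient (A B : Subgroup G)
    [WellFoundedGT (Set.Iic A)] [(A.subgroupOf B).Normal]
    [WellFoundedGT (Subgroup (B ⧸ A.subgroupOf B))] : WellFoundedGT (Set.Iic B) := by
  let φ : Set.Iic B → Set.Iic A × Subgroup (B ⧸ A.subgroupOf B) := fun K =>
    (⟨K ⊓ A, Set.mem_Iic.2 inf_le_right⟩,
      ((K : Subgroup G).subgroupOf B).map (QuotientGroup.mk' _))
  have hmono : Monotone φ := fun K K' h =>
    ⟨inf_le_inf_right A h, map_mono (subgroupOf_mono B h)⟩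
  refine StrictMono.wellFoundedGT (f := φ) fun K K' hlt => lt_of_le_not_ge (hmono hlt.le) ?_
  rintro ⟨hinf, hmap⟩
  exact hlt.not_ge (le_of_map_mk_subgroupOf_le K'.2 hlt.le (le_trans hinf inf_le_left) hmap)

theorem wellFoundedGT_Iic_of_abelian_fg_quotient {A B : Subgroup G} [WellFoundedGT (Set.Iic A)]
    (hnormal : ∀ x ∈ B, ∀ y ∈ A, x * y * x⁻¹ ∈ A)
    (hcomm : ∀ x ∈ B, ∀ y ∈ B, x * y * x⁻¹ * y⁻¹ ∈ A)
    {s : Set G} (hs : s.Finite) (hclosure : closure (s ∪ A) = B) :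
    WellFoundedGT (Set.Iic B) := by
  have : (A.subgroupOf B).Normal := ⟨fun n hn g => hnormal g g.2 n hn⟩
  have : IsMulCommutative (B ⧸ A.subgroupOf B) :=
    Normal.quotient_commutative_iff_commutator_le.2 <|
      commutator_le.2 fun x _ y _ => hcomm x x.2 y y.2
  have : Group.FG (B ⧸ A.subgroupOf B) := by
    refine QuotientGroup.fg_of_closure_union_eq_top _ (hs.preimage Subtype.val_injective.injOn) ?_
    subst hclosure
    rw [coe_subgroupOf, coe_subtype, ← Set.preimage_union]
    exact closure_closure_coe_preimage
  have := wellFoundedGT_of_isMulCommutative_of_fg (B ⧸ A.subgroupOf B)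
  exact wellFoundedGT_Iic_of_quotient A B

end Subgroup

theorem stmt0_general {G : Type*} [Group G] (m : ℕ) (N : ℕ → Subgroup G)
    (h0 : N 0 = ⊥) (hm : N m = ⊤)
    (hnormal : ∀ j, 1 ≤ j → j ≤ m →
      ∀ x ∈ N j, ∀ y ∈ N (j - 1), x * y * x⁻¹ ∈ N (j - 1))
    (habelian : ∀ j, 1 ≤ j → j ≤ m →
      ∀ x ∈ N j, ∀ y ∈ N j, x * y * x⁻¹ * y⁻¹ ∈ N (j - 1))
    (hfg : ∀ j, 1 ≤ j → j ≤ m → ∃ F : Finset G, (F : Set G) ⊆ (N j : Set G) ∧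
      Subgroup.closure ((F : Set G) ∪ (N (j - 1) : Set G)) = N j)
    (H : Subgroup G) (f : G ≃* G)
    (hH : H.map f.toMonoidHom ≤ H) :
    H.map f.toMonoidHom = H := by
  have hwf : ∀ j ≤ m, WellFoundedGT (Set.Iic (N j)) := by
    intro j
    induction j with
    | zero =>
      intro _
      rw [h0, Set.Iic_bot]
      infer_instance
    | succ j ih =>
      intro hj
      have := ih (by omega)
      obtain ⟨F, -, hF⟩ := hfg (j + 1) (by omega) hj
      exact Subgroup.wellFoundedGT_Iic_of_abelian_fg_quotient (A := N j)
        (hnormal (j + 1) (by omega) hj) (habelian (j + 1) (by omega) hj) F.finite_toSet hF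
  have : WellFoundedGT (Subgroup G) := by
    have := hwf m le_rfl
    rw [hm] at this
    exact OrderIso.IicTop.symm.strictMono.wellFoundedGT
  exact f.mapSubgroup.apply_eq_of_apply_le hH

/-- Lemma 9.1: Let `N` be a group with a finite chain of subgroups
`{1} = N₀ ≤ N₁ ≤ ⋯ ≤ N_m = N` such that each `N_{j-1}` is normal in `N_j` with
finitely generated abelian quotient. If `H ≤ N` and `f` is an automorphism of `N`
with `f(H) ≤ H` and `f(N_j) = N_j` for all `j`, then `f(H) = H`. -/
theorem stmt0 {G : Type*} [Group G] (m : ℕ) (N : ℕ → Subgroup G)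
    (h0 : N 0 = ⊥) (hm : N m = ⊤)
    (hchain : ∀ j, 1 ≤ j → j ≤ m → N (j - 1) ≤ N j)
    (hnormal : ∀ j, 1 ≤ j → j ≤ m →
      ∀ x ∈ N j, ∀ y ∈ N (j - 1), x * y * x⁻¹ ∈ N (j - 1))
    (habelian : ∀ j, 1 ≤ j → j ≤ m →
      ∀ x ∈ N j, ∀ y ∈ N j, x * y * x⁻¹ * y⁻¹ ∈ N (j - 1))
    (hfg : ∀ j, 1 ≤ j → j ≤ m → ∃ F : Finset G, (F : Set G) ⊆ (N j : Set G) ∧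
      Subgroup.closure ((F : Set G) ∪ (N (j - 1) : Set G)) = N j)
    (H : Subgroup G) (f : G ≃* G)
    (hH : H.map f.toMonoidHom ≤ H)
    (hN : ∀ j, j ≤ m → (N j).map f.toMonoidHom = N j) :
    H.map f.toMonoidHom = H :=
  stmt0_general m N h0 hm hnormal habelian hfg H f hH
end

section
/- Let L be the bi-infinite line graph, i.e., the simple graph on vertex set ℤ in which two integers m and n are adjacent if and only if |m − n| = 1. Let B be a simple graph on a vertex type β, and let S be a proper subset of the vertices of B (so there exists a vertex of B not in S) such that the induced subgraph of B on S is isomorphic to L. Then there exists no injective graph homomorphism from B to L. (Abstract core of Lemma 4.10 of the paper: combining Proposition 4.6 and Lemma 4.7, there is no injective simplicial map from the graph 𝓑 into the graph 𝓖.) -/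
/-- The bi-infinite line graph on `ℤ`: `m` and `n` are adjacent iff `|m - n| = 1`. -/
def biInfiniteLine : SimpleGraph ℤ where
  Adj m n := |m - n| = 1
  symm := by
    constructor
    intro m n h
    rwa [abs_sub_comm]
  loopless := by
    constructor
    intro m h
    simp at h

/-!
An injective self-map `g` of the line graph moves consecutive integers to integers at
distance one, and injectivity forbids `g (n + 2) = g n`, so the step `g (n + 1) - g n` never
changes sign. Hence `g` is `n ↦ g 0 ± n`, a bijection. Applied to `f` restricted to the copy
of the line inside `B`, this shows that `f` already hits every integer on that copy, so by
injectivity a vertex outside it has nowhere to go.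
-/

namespace Int

theorem eq_add_mul_of_forall_sub_eq (d : ℤ → ℤ) (c : ℤ) (h : ∀ n, d (n + 1) - d n = c) (n : ℤ) :
    d n = d 0 + c * n := by
  induction n using Int.induction_on with
  | zero => simp
  | succ k ih => linarith [h k]
  | pred k ih =>
    have hk := h (-k - 1)
    rw [sub_add_cancel] at hk
    linarith

theorem sub_eq_of_forall_sub_eq_sub (d : ℤ → ℤ)
    (h : ∀ n, d (n + 1 + 1) - d (n + 1) = d (n + 1) - d n) (n : ℤ) :
    d (n + 1) - d n = d 1 - d 0 := by
  simpa using eq_add_mul_of_forall_sub_eq (fun n ↦ d (n + 1) - d n) 0 (fun n ↦ by grind) n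

end Int

namespace biInfiniteLine

theorem adj_iff {m n : ℤ} : biInfiniteLine.Adj m n ↔ m - n = 1 ∨ m - n = -1 :=
  abs_eq zero_le_one

theorem adj_add_one (n : ℤ) : biInfiniteLine.Adj (n + 1) n :=
  adj_iff.2 (Or.inl (by ring))

theorem hom_apply_add_one_sub (g : biInfiniteLine →g biInfiniteLine) (n : ℤ) :
    g (n + 1) - g n = 1 ∨ g (n + 1) - g n = -1 :=
  adj_iff.1 (g.map_adj (adj_add_one n))

theorem hom_apply_add_one_sub_eq_of_injective (g : biInfiniteLine →g biInfiniteLine)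
    (hg : Function.Injective g) (n : ℤ) :
    g (n + 1) - g n = g 1 - g 0 := by
  refine Int.sub_eq_of_forall_sub_eq_sub g (fun k ↦ ?_) n
  have hne : g (k + 1 + 1) ≠ g k := fun h ↦ by have := hg h; omega
  rcases hom_apply_add_one_sub g k with h₀ | h₀ <;>
    rcases hom_apply_add_one_sub g (k + 1) with h₁ | h₁ <;> omega

theorem surjective_of_injective (g : biInfiniteLine →g biInfiniteLine)
    (hg : Function.Injective g) : Function.Surjective g := by
  intro t
  have hform := Int.eq_add_mul_of_forall_sub_eq g _ (hom_apply_add_one_sub_eq_of_injective g hg)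
  rcases (by simpa using hom_apply_add_one_sub g 0 : g 1 - g 0 = 1 ∨ g 1 - g 0 = -1) with hε | hε
  · exact ⟨t - g 0, by rw [hform, hε]; ring⟩
  · exact ⟨g 0 - t, by rw [hform, hε]; ring⟩

end biInfiniteLine

/-- If `B` is a simple graph, `S` is a proper subset of the vertices of `B`, and the
induced subgraph of `B` on `S` is isomorphic to the bi-infinite line, then there is no
injective graph homomorphism from `B` to the bi-infinite line. -/
theorem stmt3 {β : Type*} (B : SimpleGraph β) (S : Set β)
    (hS : ∃ v, v ∉ S)
    (hiso : Nonempty ((SimpleGraph.induce S B) ≃g biInfiniteLine)) :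
    ¬ ∃ f : B →g biInfiniteLine, Function.Injective f := by
  rintro ⟨f, hf⟩
  obtain ⟨v, hv⟩ := hS
  obtain ⟨e⟩ := hiso
  let g : biInfiniteLine →g biInfiniteLine :=
    (f.comp (SimpleGraph.Embedding.induce S).toHom).comp e.symm.toHom
  have hg : Function.Injective g :=
    hf.comp (Subtype.coe_injective.comp e.symm.injective)
  obtain ⟨n, hn⟩ := biInfiniteLine.surjective_of_injective g hg (f v)
  exact hv (hf hn ▸ (e.symm n).2)
end

section
/- Let G be a simple graph with vertex set V, let v₀ ∈ V, and let f : V → V be a map satisfying: (i) f(v₀) = v₀; (ii) for every vertex v, either f(v) = v or f(v) is adjacent to v; (iii) for every edge {u, v} of G, either f(u) = v or f(v) = u; (iv) for every vertex v there exists a natural number n with fⁿ(v) = v₀, where fⁿ denotes the n-fold iterate of f. Then G is a tree, i.e., G is connected and contains no cycle. (Abstract core of the proof of Proposition 4.2 of the paper: the deformation-retraction map f constructed there forces the graph 𝓔 to be a tree.) -/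
/-!
Let `H v` be the least `n` with `f^[n] v = v₀`. Off `v₀`, `f v` is a neighbour of `v` of smaller
height, so following `f` connects every vertex to `v₀`. Conversely, on every edge the endpoint of
larger-or-equal height is mapped by `f` to the other one, so each vertex has at most one neighbour
not above it. On a cycle, a vertex of maximal height would have two such neighbours.
-/

namespace Function

theorem exists_height_apply_lt {α : Type*} {f : α → α} {a₀ : α} (hf : ∀ a, ∃ n, f^[n] a = a₀) :
    ∃ H : α → ℕ, ∀ a, a ≠ a₀ → H (f a) < H a := by
  classical
  refine ⟨fun a => Nat.find (hf a), fun a ha => ?_⟩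
  have hpos : 0 < Nat.find (hf a) := (Nat.find_pos _).2 ha
  have hfa : f^[Nat.find (hf a) - 1] (f a) = a₀ := by
    rw [← iterate_succ_apply, Nat.succ_eq_add_one, Nat.sub_add_cancel hpos]
    exact Nat.find_spec (hf a)
  exact (Nat.find_le hfa).trans_lt (Nat.sub_lt hpos one_pos)

end Function

namespace SimpleGraph

variable {V α : Type*} {G : SimpleGraph V}

theorem connected_of_forall_ne_exists_adj_lt [Preorder α] [WellFoundedLT α] (H : V → α) (v₀ : V)
    (hdesc : ∀ v, v ≠ v₀ → ∃ u, G.Adj v u ∧ H u < H v) : G.Connected := by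
  have hreach (v : V) : G.Reachable v₀ v := by
    induction v using (InvImage.wf H wellFounded_lt).induction with
    | _ v ih =>
      by_cases hv : v = v₀
      · exact hv ▸ Reachable.refl _
      · obtain ⟨u, hvu, hlt⟩ := hdesc v hv
        exact (ih u hlt).trans hvu.symm.reachable
  exact (connected_iff_exists_forall_reachable G).2 ⟨v₀, hreach⟩

theorem isAcyclic_of_subsingleton_adj_le [LinearOrder α] (H : V → α)
    (hsub : ∀ u, {v | G.Adj u v ∧ H v ≤ H u}.Subsingleton) : G.IsAcyclic := by
  classical
  intro u c hc
  obtain ⟨w, hw, hmax⟩ := c.support.toFinset.exists_max_image H ⟨u, by simp⟩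
  rw [List.mem_toFinset] at hw
  set c' := c.rotate w hw
  have hc' : c'.IsCycle := hc.rotate hw
  have hmax' (z : V) (hz : z ∈ c'.support) : H z ≤ H w :=
    hmax z (List.mem_toFinset.2 ((c.mem_support_rotate_iff w hw).1 hz))
  exact hc'.snd_ne_penultimate <| hsub w
    ⟨c'.adj_snd hc'.not_nil, hmax' _ (c'.getVert_mem_support 1)⟩
    ⟨(c'.adj_penultimate hc'.not_nil).symm, hmax' _ (c'.getVert_mem_support _)⟩

end SimpleGraph

open SimpleGraph

/-- Let `G` be a simple graph, `v₀` a vertex, and `f` a map on vertices such that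
`f v₀ = v₀`; every vertex `v` satisfies `f v = v` or `f v` is adjacent to `v`;
for every edge `{u, v}`, either `f u = v` or `f v = u`; and every vertex reaches
`v₀` under some iterate of `f`. Then `G` is a tree. -/
theorem stmt4 {V : Type*} (G : SimpleGraph V) (v₀ : V) (f : V → V)
    (h0 : f v₀ = v₀)
    (h1 : ∀ v, f v = v ∨ G.Adj (f v) v)
    (h2 : ∀ u v, G.Adj u v → f u = v ∨ f v = u)
    (h3 : ∀ v, ∃ n : ℕ, f^[n] v = v₀) :
    G.IsTree := by
  obtain ⟨H, hH⟩ := Function.exists_height_apply_lt h3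
  have hstep (v : V) (hv : v ≠ v₀) : G.Adj v (f v) := by
    refine ((h1 v).resolve_left fun hfix => hv ?_).symm
    obtain ⟨n, hn⟩ := h3 v
    rwa [Function.iterate_fixed hfix] at hn
  have hdown (u v : V) (huv : G.Adj u v) (hle : H v ≤ H u) : f u = v := by
    refine (h2 u v huv).resolve_right fun hvu => ?_
    by_cases hv : v = v₀
    · exact huv.ne (by rw [← hvu, hv, h0])
    · exact (hvu ▸ hH v hv).not_ge hle
  refine ⟨connected_of_forall_ne_exists_adj_lt H v₀ fun v hv => ⟨f v, hstep v hv, hH v hv⟩,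
    isAcyclic_of_subsingleton_adj_le H fun u v hv w hw => ?_⟩
  exact (hdown u v hv.1 hv.2).symm.trans (hdown u w hw.1 hw.2)
end
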